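/- arXiv:math-ph/0103030 — 6 statements merged into one kernel-verified Lean document; each statement's English description precedes it below -/
import Mathlib

section
/- For every b ∈ (0,π), the function z ↦ ξ(b,z) is differentiable on (−∞,1) with derivative dξ/dz = (1/(2π²)) Σ_{n=1}^∞ sin²(n b)/(n² − z); this derivative is strictly positive, so ξ(b,·) is strictly increasing on (−∞,1). -/
open Real Filter Topology Asymptotics

/-- The digamma function `ψ = Γ'/Γ`. -/
noncomputable def digamma (x : ℝ) : ℝ := deriv Real.Gamma x / Real.Gamma x

/-- The regularized Green's function `ξ(b,z)` of a point interaction at height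
`b ∈ (0,π)` in the Dirichlet layer `ℝ²×(0,π)`, for energies `z < 1`:
`ξ(b,z) = −(1/π²) Σ_{n≥1} ln√(1 − z/n²)·sin²(n b)
          + (1/(4π²))·[γ + ψ(b/π) + (π/2)·cot b]`. -/
noncomputable def xiLayer (b z : ℝ) : ℝ :=
  -(1 / π ^ 2) *
      ∑' n : ℕ, Real.log (Real.sqrt (1 - z / ((n : ℝ) + 1) ^ 2)) * Real.sin (((n : ℝ) + 1) * b) ^ 2
    + (1 / (4 * π ^ 2)) *
      (Real.eulerMascheroniConstant + digamma (b / π) + (π / 2) * Real.cot b)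

lemma aux_one_le (n : ℕ) : (1:ℝ) ≤ ((n:ℝ)+1)^2 := by
  nlinarith [Nat.cast_nonneg (α := ℝ) n]

lemma aux_pos {w : ℝ} (hw : w < 1) (n : ℕ) : (0:ℝ) < ((n:ℝ)+1)^2 - w := by
  have := aux_one_le n; linarith

lemma aux_lower {w : ℝ} (hw : w < 1) (n : ℕ) :
    min 1 (1 - w) * ((n:ℝ)+1)^2 ≤ ((n:ℝ)+1)^2 - w := by
  have h1 := aux_one_le n
  rcases le_or_gt w 0 with h | h
  · have h2 : min 1 (1-w) ≤ 1 := min_le_left _ _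
    nlinarith
  · have h2 : min 1 (1-w) ≤ 1 - w := min_le_right _ _
    nlinarith

lemma summable_base : Summable (fun n : ℕ => 1 / ((n:ℝ)+1)^2) := by
  have h : Summable (fun n : ℕ => 1 / (n:ℝ)^2) :=
    Real.summable_one_div_nat_pow.mpr one_lt_two
  have := (summable_nat_add_iff 1).mpr h
  simpa [Nat.cast_add] using this

lemma summable_inv_sub {w : ℝ} (hw : w < 1) :
    Summable (fun n : ℕ => 1 / (((n:ℝ)+1)^2 - w)) := by
  have hc : (0:ℝ) < min 1 (1 - w) := lt_min one_pos (by linarith)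
  refine Summable.of_nonneg_of_le (fun n => one_div_nonneg.mpr (aux_pos hw n).le) (fun n => ?_)
    (summable_base.mul_left (1 / min 1 (1-w)))
  calc 1 / (((n:ℝ)+1)^2 - w) ≤ 1 / (min 1 (1-w) * ((n:ℝ)+1)^2) :=
        one_div_le_one_div_of_le (by positivity) (aux_lower hw n)
    _ = (1 / min 1 (1-w)) * (1 / ((n:ℝ)+1)^2) := by rw [one_div, one_div, one_div, mul_inv]

lemma summable_sin_sq {b : ℝ} {w : ℝ} (hw : w < 1) :
    Summable (fun n : ℕ => Real.sin (((n:ℝ)+1)*b)^2 / (((n:ℝ)+1)^2 - w)) := by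
  refine Summable.of_nonneg_of_le (fun n => div_nonneg (sq_nonneg _) (aux_pos hw n).le) (fun n => ?_) (summable_inv_sub hw)
  rw [div_le_div_iff₀ (aux_pos hw n) (aux_pos hw n)]
  nlinarith [Real.sin_sq_le_one (((n:ℝ)+1)*b), (aux_pos hw n)]

lemma xiLayer_hasDerivAt (b : ℝ) {z : ℝ} (hz : z < 1) :
    HasDerivAt (xiLayer b)
      ((1 / (2 * π ^ 2)) *
        ∑' n : ℕ, Real.sin (((n : ℝ) + 1) * b) ^ 2 / (((n : ℝ) + 1) ^ 2 - z)) z := by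
  set z₁ : ℝ := (max z 0 + 1) / 2 with hz₁def
  have hmax : max z 0 < 1 := max_lt hz one_pos
  have hz₁1 : z₁ < 1 := by rw [hz₁def]; linarith
  have hzz₁ : z < z₁ := by have := le_max_left z 0; rw [hz₁def]; linarith
  have h0z₁ : (0:ℝ) < z₁ := by have := le_max_right z 0; rw [hz₁def]; linarith
  set s : ℕ → ℝ := fun n => Real.sin (((n:ℝ)+1)*b)^2 with hs
  set g : ℕ → ℝ → ℝ := fun n y => Real.log (1 - y/((n:ℝ)+1)^2) * s n / 2 with hg
  set g' : ℕ → ℝ → ℝ := fun n y => -(1/2) * (s n / (((n:ℝ)+1)^2 - y)) with hg'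
  have harg : ∀ (n : ℕ) (y : ℝ), y ∈ Set.Iio z₁ → 0 < 1 - y/((n:ℝ)+1)^2 := by
    intro n y hy
    have h1 := aux_one_le n
    have hsq : (0:ℝ) < ((n:ℝ)+1)^2 := by positivity
    rw [sub_pos, div_lt_one hsq]
    have : y < z₁ := hy
    linarith
  have key : ∀ (n : ℕ) (y : ℝ), y ∈ Set.Iio z₁ → HasDerivAt (g n) (g' n y) y := by
    intro n y hy
    have hsq : (0:ℝ) < ((n:ℝ)+1)^2 := by positivity
    have hne : ((n:ℝ)+1)^2 - y ≠ 0 := (aux_pos (lt_trans (show y < z₁ from hy) hz₁1) n).ne'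
    have h1 : HasDerivAt (fun y : ℝ => 1 - y/((n:ℝ)+1)^2) (-(1/((n:ℝ)+1)^2)) y := by
      simpa using ((hasDerivAt_id y).div_const (((n:ℝ)+1)^2)).const_sub 1
    have h2 := ((h1.log (harg n y hy).ne').mul_const (s n)).div_const 2
    convert h2 using 1
    case e'_4 => rfl
    case e'_5 => rfl
    have h3 : 1 - y/((n:ℝ)+1)^2 = (((n:ℝ)+1)^2 - y)/((n:ℝ)+1)^2 := by field_simp
    have h4 : -(1/((n:ℝ)+1)^2) * ((n:ℝ)+1)^2 = -1 := by
      field_simp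
    rw [hg', h3, div_div_eq_mul_div, h4]
    ring
  have hu : Summable (fun n : ℕ => (1/2) * (1/(min 1 (1-z₁)) * (1/((n:ℝ)+1)^2))) :=
    ((summable_base.mul_left _).mul_left _)
  have hbound : ∀ (n : ℕ) (y : ℝ), y ∈ Set.Iio z₁ →
      ‖g' n y‖ ≤ (1/2) * (1/(min 1 (1-z₁)) * (1/((n:ℝ)+1)^2)) := by
    intro n y hy
    have hy1 : y < 1 := lt_trans hy hz₁1
    have hp := aux_pos hy1 n
    have hc : (0:ℝ) < min 1 (1 - z₁) := lt_min one_pos (by linarith)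
    have hlow : min 1 (1-z₁) * ((n:ℝ)+1)^2 ≤ ((n:ℝ)+1)^2 - y := by
      have := aux_lower hz₁1 n
      have : y < z₁ := hy
      have := aux_lower hz₁1 n
      linarith
    have hs1 : s n ≤ 1 := Real.sin_sq_le_one _
    have hs0 : 0 ≤ s n := sq_nonneg _
    rw [hg', norm_mul, Real.norm_eq_abs, Real.norm_eq_abs,
      abs_of_nonneg (div_nonneg hs0 hp.le), abs_neg, abs_of_nonneg (by norm_num : (0:ℝ) ≤ 1/2)]
    have h1 : s n / (((n:ℝ)+1)^2 - y) ≤ 1/(min 1 (1-z₁)) * (1/((n:ℝ)+1)^2) := by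
      calc s n / (((n:ℝ)+1)^2 - y) ≤ 1 / (((n:ℝ)+1)^2 - y) :=
            (div_le_div_iff_of_pos_right hp).mpr hs1
        _ ≤ 1 / (min 1 (1-z₁) * ((n:ℝ)+1)^2) := one_div_le_one_div_of_le (by positivity) hlow
        _ = 1/(min 1 (1-z₁)) * (1/((n:ℝ)+1)^2) := by rw [one_div, one_div, one_div, mul_inv]
    nlinarith
  have hg0 : Summable fun n => g n 0 := by
    have : (fun n => g n 0) = fun _ => (0:ℝ) := by
      funext n; simp [hg]
    rw [this]; exact summable_zero
  have hA : HasDerivAt (fun y => ∑' n, g n y) (∑' n, g' n z) z :=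
    hasDerivAt_tsum_of_isPreconnected hu isOpen_Iio (convex_Iio z₁).isPreconnected
      key hbound (Set.mem_Iio.mpr h0z₁) hg0 (Set.mem_Iio.mpr hzz₁)
  set C : ℝ := (1 / (4 * π ^ 2)) *
      (Real.eulerMascheroniConstant + digamma (b / π) + (π / 2) * Real.cot b) with hC
  have hB := (hA.const_mul (-(1 / π ^ 2))).add_const C
  have heq : xiLayer b =ᶠ[nhds z] fun y => -(1 / π ^ 2) * ∑' n, g n y + C := by
    filter_upwards [Iio_mem_nhds hzz₁] with y hy
    unfold xiLayer
    congr 1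
    congr 1
    refine tsum_congr fun n => ?_
    rw [hg, Real.log_sqrt (harg n y hy).le]
    ring
  have := hB.congr_of_eventuallyEq heq
  convert this using 1
  case e'_4 => rfl
  case e'_5 => rfl
  have : ∑' n, g' n z = -(1/2) * ∑' n : ℕ, s n / (((n:ℝ)+1)^2 - z) := tsum_mul_left
  rw [this]
  ring

lemma deriv_pos (b : ℝ) (hb0 : 0 < b) (hbπ : b < π) {z : ℝ} (hz : z < 1) :
    0 < (1 / (2 * π ^ 2)) *
      ∑' n : ℕ, Real.sin (((n : ℝ) + 1) * b) ^ 2 / (((n : ℝ) + 1) ^ 2 - z) := by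
  have hπ := Real.pi_pos
  have hT : 0 < ∑' n : ℕ, Real.sin (((n : ℝ) + 1) * b) ^ 2 / (((n : ℝ) + 1) ^ 2 - z) := by
    refine Summable.tsum_pos (summable_sin_sq hz)
      (fun n => div_nonneg (sq_nonneg _) (aux_pos hz n).le) 0 ?_
    have hsb : 0 < Real.sin b := Real.sin_pos_of_pos_of_lt_pi hb0 hbπ
    apply div_pos
    · simpa using pow_pos hsb 2
    · simpa using aux_pos hz 0
  positivity

/-- For every `b ∈ (0,π)`, `ξ(b,·)` is differentiable on `(−∞,1)` with derivative
`(1/(2π²)) Σ_{n≥1} sin²(n b)/(n² − z)`, this derivative is strictly positive, and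
`ξ(b,·)` is strictly increasing on `(−∞,1)`. -/
theorem xiLayer_hasDerivAt_and_strictMonoOn (b : ℝ) (hb0 : 0 < b) (hbπ : b < π) :
    (∀ z : ℝ, z < 1 →
        HasDerivAt (xiLayer b)
          ((1 / (2 * π ^ 2)) *
            ∑' n : ℕ, Real.sin (((n : ℝ) + 1) * b) ^ 2 / (((n : ℝ) + 1) ^ 2 - z)) z ∧
        0 < (1 / (2 * π ^ 2)) *
            ∑' n : ℕ, Real.sin (((n : ℝ) + 1) * b) ^ 2 / (((n : ℝ) + 1) ^ 2 - z)) ∧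
    StrictMonoOn (xiLayer b) (Set.Iio 1) := by
  constructor
  · exact fun z hz => ⟨xiLayer_hasDerivAt b hz, deriv_pos b hb0 hbπ hz⟩
  · apply strictMonoOn_of_deriv_pos (convex_Iio 1)
    · exact fun z hz => (xiLayer_hasDerivAt b hz).continuousAt.continuousWithinAt
    · intro z hz
      rw [interior_Iio] at hz
      rw [(xiLayer_hasDerivAt b hz).deriv]
      exact deriv_pos b hb0 hbπ hz
end

section
/- For every b ∈ (0,π), the difference ξ(b,z) + (1/π²)·ln√(1−z)·sin²(b) remains bounded as z → 1−; consequently ξ(b,z) → +∞ as z → 1−. -/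
/-!
Splitting off the `n = 1` term, `ξ(b,z) + (1/π²)·ln√(1−z)·sin²b` is the constant part
of `ξ` minus `(1/π²)` times the tail `Σ_{n≥2} ln√(1 − z/n²)·sin²(nb)`. Since
`z/n² ≤ 1/4` there, `|ln√(1 − z/n²)| ≤ 1/n²` uniformly in `z ∈ [0,1]`, so the tail
is bounded. As `ln√(1−z) → −∞` and `sin b > 0`, boundedness of the sum forces
`ξ(b,z) → +∞`.
-/

open Real Filter Topology Asymptotics

lemma Real.abs_log_one_sub_le {t : ℝ} (ht0 : 0 ≤ t) (ht1 : t < 1) :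
    |log (1 - t)| ≤ t / (1 - t) := by
  have hpos : 0 < 1 - t := by linarith
  have hlower : 1 - (1 - t)⁻¹ ≤ log (1 - t) := one_sub_inv_le_log_of_pos hpos
  rw [abs_of_nonpos (log_nonpos hpos.le (by linarith))]
  have : 1 - (1 - t)⁻¹ = -(t / (1 - t)) := by field_simp; ring
  linarith

lemma Filter.tendsto_atTop_of_abs_add_le {α β : Type*} [AddCommGroup β] [LinearOrder β]
    [IsOrderedAddMonoid β] {l : Filter α} {f g : α → β} {C : β}
    (hbdd : ∀ᶠ x in l, |f x + g x| ≤ C) (hg : Tendsto g l atBot) : Tendsto f l atTop := by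
  refine tendsto_atTop_mono' l ?_
    (tendsto_atTop_add_const_left l (-C) (tendsto_neg_atTop_iff.mpr hg))
  filter_upwards [hbdd] with x hx
  calc -C + -g x ≤ f x + g x + -g x := by gcongr; exact (abs_le.mp hx).1
    _ = f x := add_neg_cancel_right _ _

lemma tendsto_log_sqrt_one_sub_nhdsLT_one :
    Tendsto (fun z : ℝ => log (√(1 - z))) (𝓝[<] 1) atBot := by
  have hsub : Tendsto (fun z : ℝ => 1 - z) (𝓝[<] 1) (𝓝[>] 0) := by
    have hmaps : Set.MapsTo (fun z : ℝ => 1 - z) (Set.Iio 1) (Set.Ioi 0) :=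
      fun z (hz : z < 1) => show 0 < 1 - z from sub_pos.mpr hz
    simpa using (continuous_sub_left (1 : ℝ)).continuousWithinAt.tendsto_nhdsWithin (x := 1) hmaps
  have hhalf := (tendsto_log_nhdsGT_zero.comp hsub).atBot_div_const (two_pos (α := ℝ))
  refine hhalf.congr' ?_
  filter_upwards [self_mem_nhdsWithin] with z (hz : z < 1)
  exact (log_sqrt (by linarith)).symm

/-- Indexed from `0`: this is the paper's summand for `n + 1`. -/
noncomputable def xiLayerSummand (b z : ℝ) (n : ℕ) : ℝ :=
  log (√(1 - z / ((n : ℝ) + 1) ^ 2)) * sin (((n : ℝ) + 1) * b) ^ 2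

section Tail

variable {z : ℝ} (b : ℝ) (hz0 : 0 ≤ z) (hz1 : z ≤ 1)
include hz0 hz1

lemma abs_xiLayerSummand_succ_le (n : ℕ) :
    |xiLayerSummand b z (n + 1)| ≤ 1 / ((n : ℝ) + 2) ^ 2 := by
  set x := z / ((n : ℝ) + 2) ^ 2 with hx
  have hn : (4 : ℝ) ≤ ((n : ℝ) + 2) ^ 2 := by nlinarith [(n.cast_nonneg : (0 : ℝ) ≤ n)]
  have hx0 : 0 ≤ x := by positivity
  have hxle : x ≤ 1 / ((n : ℝ) + 2) ^ 2 := div_le_div_of_nonneg_right hz1 (by positivity)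
  have hx4 : x ≤ 1 / 4 := hxle.trans (by gcongr)
  have hlog : |log (√(1 - x))| ≤ x := by
    rw [log_sqrt (by linarith), abs_div, abs_two, div_le_iff₀ two_pos]
    calc |log (1 - x)| ≤ x / (1 - x) := Real.abs_log_one_sub_le hx0 (by linarith)
      _ ≤ x * 2 := by rw [div_le_iff₀ (by linarith)]; nlinarith
  have hsummand :
      xiLayerSummand b z (n + 1) = log (√(1 - x)) * sin (((n : ℝ) + 2) * b) ^ 2 := by
    simp only [xiLayerSummand, hx]; push_cast; ring_nf
  rw [hsummand, abs_mul, abs_of_nonneg (sq_nonneg (sin (((n : ℝ) + 2) * b)))]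
  calc |log (√(1 - x))| * sin (((n : ℝ) + 2) * b) ^ 2 ≤ |log (√(1 - x))| * 1 := by
        gcongr; exact sin_sq_le_one _
    _ ≤ 1 / ((n : ℝ) + 2) ^ 2 := by linarith

omit hz0 hz1 in
lemma summable_one_div_nat_add_two_sq : Summable (fun n : ℕ => 1 / ((n : ℝ) + 2) ^ 2) := by
  have h := (summable_nat_add_iff 2).mpr (Real.summable_one_div_nat_pow.mpr one_lt_two)
  exact h.congr fun n => by push_cast; ring

lemma summable_abs_xiLayerSummand_succ : Summable (fun n => |xiLayerSummand b z (n + 1)|) :=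
  summable_one_div_nat_add_two_sq.of_nonneg_of_le (fun _ => abs_nonneg _)
    (abs_xiLayerSummand_succ_le b hz0 hz1)

lemma abs_tsum_xiLayerSummand_succ_le :
    |∑' n, xiLayerSummand b z (n + 1)| ≤ ∑' n : ℕ, 1 / ((n : ℝ) + 2) ^ 2 := by
  have habs := summable_abs_xiLayerSummand_succ b hz0 hz1
  calc |∑' n, xiLayerSummand b z (n + 1)| ≤ ∑' n, |xiLayerSummand b z (n + 1)| := by
        simpa only [Real.norm_eq_abs] using
          norm_tsum_le_tsum_norm (f := fun n => xiLayerSummand b z (n + 1)) habs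
    _ ≤ ∑' n : ℕ, 1 / ((n : ℝ) + 2) ^ 2 :=
        habs.tsum_le_tsum (abs_xiLayerSummand_succ_le b hz0 hz1) summable_one_div_nat_add_two_sq

lemma xiLayer_add_log_sqrt_mul_sin_sq :
    xiLayer b z + 1 / π ^ 2 * log (√(1 - z)) * sin b ^ 2
      = -(1 / π ^ 2) * ∑' n, xiLayerSummand b z (n + 1)
        + 1 / (4 * π ^ 2) * (eulerMascheroniConstant + digamma (b / π) + π / 2 * cot b) := by
  have hsum : Summable (xiLayerSummand b z) :=
    (summable_nat_add_iff 1).mp (summable_abs_xiLayerSummand_succ b hz0 hz1).of_abs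
  have hfirst : xiLayerSummand b z 0 = log (√(1 - z)) * sin b ^ 2 := by
    simp [xiLayerSummand]
  change -(1 / π ^ 2) * ∑' n, xiLayerSummand b z n + _ + _ = _
  rw [hsum.tsum_eq_zero_add, hfirst]
  ring

lemma abs_xiLayer_add_log_sqrt_mul_sin_sq_le :
    |xiLayer b z + 1 / π ^ 2 * log (√(1 - z)) * sin b ^ 2|
      ≤ 1 / π ^ 2 * ∑' n : ℕ, 1 / ((n : ℝ) + 2) ^ 2
        + |1 / (4 * π ^ 2) * (eulerMascheroniConstant + digamma (b / π) + π / 2 * cot b)| := by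
  rw [xiLayer_add_log_sqrt_mul_sin_sq b hz0 hz1]
  refine (abs_add_le _ _).trans ?_
  gcongr
  rw [abs_mul, abs_neg, abs_of_pos (by positivity)]
  exact mul_le_mul_of_nonneg_left (abs_tsum_xiLayerSummand_succ_le b hz0 hz1) (by positivity)

end Tail

/-- For every `b ∈ (0,π)`, the difference `ξ(b,z) + (1/π²)·ln√(1−z)·sin²(b)` remains
bounded as `z → 1−`; consequently `ξ(b,z) → +∞` as `z → 1−`. -/
theorem xiLayer_threshold_asymptotics (b : ℝ) (hb0 : 0 < b) (hbπ : b < π) :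
    (∃ C : ℝ, ∀ᶠ z in 𝓝[<] (1 : ℝ),
        |xiLayer b z + (1 / π ^ 2) * Real.log (Real.sqrt (1 - z)) * Real.sin b ^ 2| ≤ C) ∧
    Tendsto (xiLayer b) (𝓝[<] (1 : ℝ)) atTop := by
  obtain ⟨C, hC⟩ : ∃ C : ℝ, ∀ᶠ z in 𝓝[<] (1 : ℝ),
      |xiLayer b z + 1 / π ^ 2 * log (√(1 - z)) * sin b ^ 2| ≤ C :=
    ⟨_, Filter.mem_of_superset (Ioo_mem_nhdsLT (zero_lt_one' ℝ)) fun z hz =>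
      abs_xiLayer_add_log_sqrt_mul_sin_sq_le b hz.1.le hz.2.le⟩
  have hsin : 0 < sin b := sin_pos_of_pos_of_lt_pi hb0 hbπ
  refine ⟨⟨C, hC⟩, Filter.tendsto_atTop_of_abs_add_le hC ?_⟩
  exact (tendsto_log_sqrt_one_sub_nhdsLT_one.const_mul_atBot (by positivity)).atBot_mul_const
    (pow_pos hsin 2)
end

section
/- For every b ∈ (0,π) and every α ∈ ℝ there exists a unique z = ε(α,b) ∈ (−∞,1) with ξ(b,z) = α; moreover the map α ↦ ε(α,b) is strictly increasing, i.e. ε(α,b) > ε(α',b) whenever α > α'. -/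
open Real Filter Topology Asymptotics

noncomputable def gterm (b : ℝ) (n : ℕ) (z : ℝ) : ℝ :=
  Real.log (Real.sqrt (1 - z / ((n : ℝ) + 1) ^ 2)) * Real.sin (((n : ℝ) + 1) * b) ^ 2

lemma sq_ge_one (n : ℕ) : (1:ℝ) ≤ ((n : ℝ) + 1) ^ 2 := by
  have : (0:ℝ) ≤ n := Nat.cast_nonneg n
  nlinarith

lemma y_ge {z m : ℝ} (hm1 : m ≤ 1) (hz : z ≤ 1 - m) (n : ℕ) :
    m ≤ 1 - z / ((n : ℝ) + 1) ^ 2 := by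
  have h1 := sq_ge_one n
  have h0 : (0:ℝ) < ((n : ℝ) + 1) ^ 2 := by positivity
  rcases le_or_gt z 0 with h | h
  · have : z / ((n : ℝ) + 1) ^ 2 ≤ 0 := div_nonpos_of_nonpos_of_nonneg h (le_of_lt h0)
    linarith
  · have : z / ((n : ℝ) + 1) ^ 2 ≤ z := by
      rw [div_le_iff₀ h0]; nlinarith
    linarith

lemma y_pos {z : ℝ} (hz : z < 1) (n : ℕ) : 0 < 1 - z / ((n : ℝ) + 1) ^ 2 := by
  have hmin : (0:ℝ) < min (1 - z) 1 := lt_min (by linarith) one_pos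
  have h := y_ge (z := z) (m := min (1 - z) 1) (min_le_right _ _)
    (by have := min_le_left (1 - z) 1; linarith) n
  linarith

lemma abs_log_le {y m : ℝ} (hm : 0 < m) (hm1 : m ≤ 1) (hmy : m ≤ y) :
    |Real.log y| ≤ |y - 1| / m := by
  rcases le_or_gt 1 y with h | h
  · rw [abs_of_nonneg (Real.log_nonneg h), abs_of_nonneg (by linarith)]
    have h1 := Real.log_le_sub_one_of_pos (by linarith : (0:ℝ) < y)
    rw [le_div_iff₀ hm]; nlinarith
  · have hy : 0 < y := lt_of_lt_of_le hm hmy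
    rw [abs_of_nonpos (Real.log_nonpos (le_of_lt hy) (le_of_lt h)),
      abs_of_nonpos (by linarith)]
    have h1 := Real.log_le_sub_one_of_pos (inv_pos.mpr hy)
    rw [Real.log_inv] at h1
    have h2 : y⁻¹ - 1 = (1 - y) / y := by field_simp
    rw [h2] at h1
    have h3 : (1 - y) / y ≤ (1 - y) / m :=
      div_le_div_of_nonneg_left (by linarith) hm hmy
    have h4 : -(y - 1) / m = (1 - y) / m := by ring_nf
    rw [h4]; linarith

lemma gterm_bound (b : ℝ) {z M m : ℝ} (hm : 0 < m) (hm1 : m ≤ 1) (hzM : |z| ≤ M)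
    (hzm : z ≤ 1 - m) (n : ℕ) :
    ‖gterm b n z‖ ≤ M / (2 * m) * (1 / ((n : ℝ) + 1) ^ 2) := by
  have hy : m ≤ 1 - z / ((n : ℝ) + 1) ^ 2 := y_ge hm1 hzm n
  have hy0 : (0:ℝ) ≤ 1 - z / ((n : ℝ) + 1) ^ 2 := by linarith
  have hd : (0:ℝ) < ((n : ℝ) + 1) ^ 2 := by positivity
  have hlog : |Real.log (Real.sqrt (1 - z / ((n : ℝ) + 1) ^ 2))| ≤
      |z| / ((n : ℝ) + 1) ^ 2 / m / 2 := by
    rw [Real.log_sqrt hy0, abs_div, abs_two]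
    have := abs_log_le hm hm1 hy
    have heq : |1 - z / ((n : ℝ) + 1) ^ 2 - 1| = |z| / ((n : ℝ) + 1) ^ 2 := by
      rw [show (1 : ℝ) - z / ((n : ℝ) + 1) ^ 2 - 1 = -(z / ((n : ℝ) + 1) ^ 2) by ring,
        abs_neg, abs_div, abs_of_pos hd]
    rw [heq] at this
    have := div_le_div_of_nonneg_right (c := 2) this (by norm_num)
    linarith
  have hsin : Real.sin (((n : ℝ) + 1) * b) ^ 2 ≤ 1 := by
    nlinarith [Real.neg_one_le_sin (((n:ℝ)+1)*b), Real.sin_le_one (((n:ℝ)+1)*b)]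
  have hM : 0 ≤ M := le_trans (abs_nonneg z) hzM
  calc ‖gterm b n z‖ = |Real.log (Real.sqrt (1 - z / ((n : ℝ) + 1) ^ 2))| *
        Real.sin (((n : ℝ) + 1) * b) ^ 2 := by
        rw [gterm, norm_mul, Real.norm_eq_abs, Real.norm_eq_abs,
          abs_of_nonneg (sq_nonneg (Real.sin (((n:ℝ)+1)*b)))]
    _ ≤ |z| / ((n : ℝ) + 1) ^ 2 / m / 2 * 1 :=
        mul_le_mul hlog hsin (sq_nonneg _) (by positivity)
    _ ≤ M / (2 * m) * (1 / ((n : ℝ) + 1) ^ 2) := by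
        rw [mul_one]
        have hrw : M / (2 * m) * (1 / ((n:ℝ)+1)^2) = M / ((n:ℝ)+1)^2 / m / 2 := by
          ring
        rw [hrw]
        gcongr

lemma summable_inv_sq : Summable (fun n : ℕ => 1 / ((n : ℝ) + 1) ^ 2) := by
  have h : Summable (fun n : ℕ => 1 / (n : ℝ) ^ 2) :=
    Real.summable_one_div_nat_pow.mpr one_lt_two
  have := (summable_nat_add_iff 1).mpr h
  refine this.congr fun n => ?_
  push_cast
  ring

lemma summable_gterm (b : ℝ) {z : ℝ} (hz : z < 1) : Summable (fun n => gterm b n z) := by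
  set m := min (1 - z) 1 with hm
  have hm0 : 0 < m := lt_min (by linarith) one_pos
  have hm1 : m ≤ 1 := min_le_right _ _
  have hzm : z ≤ 1 - m := by have := min_le_left (1 - z) 1; simp only [hm]; linarith
  exact Summable.of_norm_bounded (summable_inv_sq.mul_left (|z| / (2 * m)))
    (fun n => gterm_bound b hm0 hm1 le_rfl hzm n)

lemma contOn_tsum_gterm (b a t : ℝ) (ht : t < 1) :
    ContinuousOn (fun z => ∑' n, gterm b n z) (Set.Icc a t) := by
  rcases le_or_gt a t with hat | hat
  · set m := min (1 - t) 1 with hm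
    have hm0 : 0 < m := lt_min (by linarith) one_pos
    have hm1 : m ≤ 1 := min_le_right _ _
    have hmt : m ≤ 1 - t := min_le_left _ _
    set M := max |a| |t| with hM
    have hwmem : ∀ z : ℝ, a ≤ max a (min z t) ∧ max a (min z t) ≤ t := fun z =>
      ⟨le_max_left _ _, max_le hat (min_le_right z t)⟩
    have hcont : Continuous fun z : ℝ => max a (min z t) :=
      continuous_const.max (continuous_id.min continuous_const)
    have hGcont : Continuous fun z : ℝ => ∑' n, gterm b n (max a (min z t)) := by
      apply continuous_tsum (f := fun (n : ℕ) (z : ℝ) => gterm b n (max a (min z t))) (u := fun n : ℕ => M / (2 * m) * (1 / ((n : ℝ) + 1) ^ 2))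
      · intro n
        have hpos : ∀ z : ℝ, Real.sqrt (1 - max a (min z t) / ((n : ℝ) + 1) ^ 2) ≠ 0 := by
          intro z
          have := y_pos (lt_of_le_of_lt (hwmem z).2 ht) n
          positivity
        apply Continuous.mul _ continuous_const
        exact Continuous.log (Real.continuous_sqrt.comp
          (continuous_const.sub (hcont.div_const _))) hpos
      · exact summable_inv_sq.mul_left _
      · intro n z
        obtain ⟨h1, h2⟩ := hwmem z
        have habs : |max a (min z t)| ≤ M := by
          rw [abs_le]
          refine ⟨le_trans ?_ h1, le_trans h2 (le_trans (le_abs_self t) (le_max_right _ _))⟩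
          calc -M ≤ -|a| := neg_le_neg (le_max_left _ _)
            _ ≤ a := neg_abs_le a
        exact gterm_bound b hm0 hm1 habs (by linarith) n
    apply (hGcont.continuousOn).congr
    intro z hz
    obtain ⟨hz1, hz2⟩ := hz
    simp only [min_eq_left hz2, max_eq_right hz1]
  · rw [Set.Icc_eq_empty (not_le.mpr hat)]
    exact continuousOn_empty _

lemma gterm_zero (b : ℝ) {z : ℝ} (hz : z < 1) :
    gterm b 0 z = Real.log (1 - z) / 2 * Real.sin b ^ 2 := by
  have h : ((0 : ℕ) : ℝ) + 1 = 1 := by norm_num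
  rw [gterm, h]
  rw [one_pow, div_one, one_mul, Real.log_sqrt (by linarith : (0:ℝ) ≤ 1 - z)]

lemma gterm_antitone (b : ℝ) {z z' : ℝ} (h : z ≤ z') (h1 : z' < 1) (n : ℕ) :
    gterm b n z' ≤ gterm b n z := by
  have hd : (0:ℝ) < ((n : ℝ) + 1) ^ 2 := by positivity
  have hy' := y_pos h1 n
  apply mul_le_mul_of_nonneg_right _ (sq_nonneg _)
  apply Real.log_le_log (Real.sqrt_pos.mpr hy')
  apply Real.sqrt_le_sqrt
  have : z / ((n : ℝ) + 1) ^ 2 ≤ z' / ((n : ℝ) + 1) ^ 2 := by gcongr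
  linarith

lemma tsum_gterm_anti (b : ℝ) (hb0 : 0 < b) (hbπ : b < π) {z z' : ℝ} (h : z < z')
    (h1 : z' < 1) : ∑' n, gterm b n z' < ∑' n, gterm b n z := by
  apply Summable.tsum_lt_tsum (i := 0) (fun n => gterm_antitone b (le_of_lt h) h1 n)
    _ (summable_gterm b h1) (summable_gterm b (lt_trans h h1))
  rw [gterm_zero b h1, gterm_zero b (lt_trans h h1)]
  have hsin : 0 < Real.sin b ^ 2 := by
    have := Real.sin_pos_of_pos_of_lt_pi hb0 hbπ
    positivity
  have hlog : Real.log (1 - z') < Real.log (1 - z) :=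
    Real.log_lt_log (by linarith) (by linarith)
  have : Real.log (1 - z') / 2 < Real.log (1 - z) / 2 := by linarith
  exact mul_lt_mul_of_pos_right this hsin

lemma tsum_gterm_ge (b : ℝ) {z : ℝ} (hz : z ≤ 0) :
    gterm b 0 z ≤ ∑' n, gterm b n z := by
  apply Summable.le_tsum (summable_gterm b (by linarith)) 0
  intro n _
  have hd : (0:ℝ) < ((n : ℝ) + 1) ^ 2 := by positivity
  have hy : (1:ℝ) ≤ 1 - z / ((n : ℝ) + 1) ^ 2 := by
    have : z / ((n : ℝ) + 1) ^ 2 ≤ 0 := div_nonpos_of_nonpos_of_nonneg hz (le_of_lt hd)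
    linarith
  exact mul_nonneg (Real.log_nonneg (Real.one_le_sqrt.mpr hy)) (sq_nonneg _)

lemma tsum_gterm_le (b : ℝ) {z : ℝ} (hz0 : 0 ≤ z) (hz1 : z < 1) :
    ∑' n, gterm b n z ≤ gterm b 0 z := by
  have hs := summable_gterm b hz1
  have h := Summable.le_tsum hs.neg 0 (fun n _ => ?_)
  · rw [tsum_neg] at h
    simpa using h
  · simp only [Pi.neg_apply, neg_nonneg, gterm]
    have hd : (0:ℝ) < ((n : ℝ) + 1) ^ 2 := by positivity
    have hy1 : 1 - z / ((n : ℝ) + 1) ^ 2 ≤ 1 := by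
      have : 0 ≤ z / ((n : ℝ) + 1) ^ 2 := div_nonneg hz0 (le_of_lt hd)
      linarith
    exact mul_nonpos_of_nonpos_of_nonneg
      (Real.log_nonpos (Real.sqrt_nonneg _) (Real.sqrt_le_one.mpr hy1))
      (sq_nonneg _)

/-- For every `b ∈ (0,π)` and every `α ∈ ℝ` there is a unique `z = ε(α,b) ∈ (−∞,1)`
with `ξ(b,z) = α`; moreover the bound-state energy is strictly increasing in `α`. -/
theorem xiLayer_unique_eigenvalue_strictMono (b : ℝ) (hb0 : 0 < b) (hbπ : b < π) :
    (∀ α : ℝ, ∃! z : ℝ, z < 1 ∧ xiLayer b z = α) ∧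
    (∀ ε : ℝ → ℝ, (∀ α : ℝ, ε α < 1 ∧ xiLayer b (ε α) = α) → StrictMono ε) := by
  have hπ : (0:ℝ) < π := Real.pi_pos
  have hπ2 : (0:ℝ) < π ^ 2 := by positivity
  set C : ℝ := (1 / (4 * π ^ 2)) *
      (Real.eulerMascheroniConstant + digamma (b / π) + (π / 2) * Real.cot b) with hC
  have hxi : ∀ z, xiLayer b z = -(1 / π ^ 2) * ∑' n, gterm b n z + C := by
    intro z; rfl
  have hkey : ∀ z α : ℝ, xiLayer b z = α ↔ (∑' n, gterm b n z) = π ^ 2 * (C - α) := by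
    intro z α
    rw [hxi]
    constructor
    · intro h
      have : (∑' n, gterm b n z) / π ^ 2 = C - α := by
        field_simp at h ⊢
        linarith
      field_simp at this
      linarith
    · intro h
      rw [h]
      field_simp
      ring
  have hsin : 0 < Real.sin b := Real.sin_pos_of_pos_of_lt_pi hb0 hbπ
  have hsin2 : 0 < Real.sin b ^ 2 := by positivity
  -- strict antitonicity gives the mono part and uniqueness
  have hmono : ∀ (ε : ℝ → ℝ), (∀ α : ℝ, ε α < 1 ∧ xiLayer b (ε α) = α) → StrictMono ε := by
    intro ε hε
    intro α α' hαα'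
    by_contra hcon
    push_neg at hcon
    obtain ⟨h1, h2⟩ := hε α
    obtain ⟨h1', h2'⟩ := hε α'
    rcases eq_or_lt_of_le hcon with heq | hlt
    · rw [heq, h2] at h2'
      exact absurd h2' (ne_of_lt hαα')
    · have := tsum_gterm_anti b hb0 hbπ hlt h1
      rw [(hkey _ α).mp h2, (hkey _ α').mp h2'] at this
      nlinarith
  refine ⟨fun α => ?_, hmono⟩
  set β := π ^ 2 * (C - α) with hβ
  set E := Real.exp (2 * β / Real.sin b ^ 2) with hE
  have hE0 : 0 < E := Real.exp_pos _
  set z₁ := min 0 (1 - E) with hz₁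
  set z₂ := max 0 (1 - E) with hz₂
  have hz12 : z₁ ≤ z₂ := le_trans (min_le_left _ _) (le_max_left _ _)
  have hz₂1 : z₂ < 1 := by
    rw [hz₂, max_lt_iff]
    exact ⟨one_pos, by linarith⟩
  have hz₁0 : z₁ ≤ 0 := min_le_left _ _
  have hz₂0 : 0 ≤ z₂ := le_max_left _ _
  -- F z₁ ≥ β
  have hF1 : β ≤ ∑' n, gterm b n z₁ := by
    have h1E : E ≤ 1 - z₁ := by
      have : z₁ ≤ 1 - E := min_le_right _ _
      linarith
    have hlogE : 2 * β / Real.sin b ^ 2 ≤ Real.log (1 - z₁) := by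
      rw [← Real.log_exp (2 * β / Real.sin b ^ 2)]
      exact Real.log_le_log hE0 h1E
    have : β ≤ Real.log (1 - z₁) / 2 * Real.sin b ^ 2 := by
      rw [div_le_iff₀ hsin2] at hlogE
      nlinarith
    calc β ≤ gterm b 0 z₁ := by rw [gterm_zero b (by linarith)]; exact this
      _ ≤ _ := tsum_gterm_ge b hz₁0
  -- F z₂ ≤ β
  have hF2 : ∑' n, gterm b n z₂ ≤ β := by
    have h1E : 1 - z₂ ≤ E := by
      have : 1 - E ≤ z₂ := le_max_right _ _
      linarith
    have h1z₂ : 0 < 1 - z₂ := by linarith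
    have hlogE : Real.log (1 - z₂) ≤ 2 * β / Real.sin b ^ 2 := by
      rw [← Real.log_exp (2 * β / Real.sin b ^ 2)]
      exact Real.log_le_log h1z₂ h1E
    have hg0 : gterm b 0 z₂ ≤ β := by
      rw [gterm_zero b hz₂1]
      rw [le_div_iff₀ hsin2] at hlogE
      nlinarith
    exact le_trans (tsum_gterm_le b hz₂0 hz₂1) hg0
  -- IVT
  have hcont := contOn_tsum_gterm b z₁ z₂ hz₂1
  have hmem : β ∈ Set.Icc (∑' n, gterm b n z₂) (∑' n, gterm b n z₁) := ⟨hF2, hF1⟩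
  obtain ⟨z, hzmem, hzval'⟩ := intermediate_value_Icc' hz12 hcont hmem
  have hzval : (∑' n, gterm b n z) = β := hzval'
  have hzlt : z < 1 := lt_of_le_of_lt hzmem.2 hz₂1
  refine ⟨z, ⟨hzlt, (hkey z α).mpr hzval⟩, ?_⟩
  rintro y ⟨hy1, hy2⟩
  have hyval := (hkey y α).mp hy2
  by_contra hne
  rcases lt_or_gt_of_ne hne with h | h
  · have := tsum_gterm_anti b hb0 hbπ h hzlt
    rw [hzval, hyval] at this
    exact lt_irrefl _ this
  · have := tsum_gterm_anti b hb0 hbπ h hy1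
    rw [hzval, hyval] at this
    exact lt_irrefl _ this
end

section
/- Unitarity of the one-center s-wave S-matrix: let b ∈ (0,π), let z > 1 be a real number that is not the square of an integer, set N := ⌊√z⌋, let α ∈ ℝ, and let ξ ∈ ℂ satisfy Im ξ = (1/(2π)) Σ_{n=1}^N sin²(n b) and ξ ≠ α. Then the N×N complex matrix S with entries S_{nj} := δ_{nj} + (i/π)·sin(n b)·sin(j b)/(α − ξ), 1 ≤ n,j ≤ N, is unitary, i.e. Σ_{j=1}^N S_{nj}·conj(S_{sj}) = δ_{ns} for all 1 ≤ n,s ≤ N. -/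
open Real Complex

/-- Unitarity of the one-center s-wave S-matrix: for `b ∈ (0,π)`, a real energy
`z > 1` which is not the square of an integer, `N = ⌊√z⌋` open channels, `α ∈ ℝ`
and `ξ ∈ ℂ` with `Im ξ = (1/(2π)) Σ_{n=1}^N sin²(n b)` and `ξ ≠ α`, the matrix
`S_{nj} = δ_{nj} + (i/π)·sin(n b)·sin(j b)/(α − ξ)` is unitary. -/
theorem sWave_S_matrix_unitary (b z : ℝ) (hb0 : 0 < b) (hbπ : b < π) (hz : 1 < z)
    (hsq : ∀ k : ℤ, z ≠ (k : ℝ) ^ 2)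
    (N : ℕ) (hN : N = ⌊Real.sqrt z⌋₊) (α : ℝ) (ξ : ℂ)
    (hξ : ξ.im = (1 / (2 * π)) * ∑ n ∈ Finset.range N, Real.sin (((n : ℝ) + 1) * b) ^ 2)
    (hξα : ξ ≠ (α : ℂ))
    (S : Matrix (Fin N) (Fin N) ℂ)
    (hS : ∀ n j : Fin N, S n j = (if n = j then 1 else 0) +
        (Complex.I / (π : ℂ)) * (Real.sin (((n : ℝ) + 1) * b) : ℂ) *
          (Real.sin (((j : ℝ) + 1) * b) : ℂ) / ((α : ℂ) - ξ)) :
    ∀ n s : Fin N, ∑ j : Fin N, S n j * starRingEnd ℂ (S s j) = if n = s then 1 else 0 := by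
  intro n s
  have hπ : (π : ℂ) ≠ 0 := by exact_mod_cast Real.pi_ne_zero
  have hw : (α : ℂ) - ξ ≠ 0 := sub_ne_zero.2 fun h => hξα h.symm
  set A : ℂ := Complex.I / (π : ℂ) / ((α : ℂ) - ξ) with hA
  set σ : Fin N → ℂ := fun j => ((Real.sin (((j : ℝ) + 1) * b) : ℝ) : ℂ) with hσ
  have hSj : ∀ n j : Fin N, S n j = (if n = j then 1 else 0) + A * σ n * σ j := by
    intro m j; rw [hS]; rw [hA]; simp only [hσ]; ring
  have hconjσ : ∀ j, starRingEnd ℂ (σ j) = σ j := fun j => Complex.conj_ofReal _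
  set T : ℝ := ∑ j ∈ Finset.range N, Real.sin (((j : ℝ) + 1) * b) ^ 2 with hTdef
  have hT : ∑ j : Fin N, σ j * σ j = (T : ℂ) := by
    rw [hTdef, Complex.ofReal_sum]
    simp only [Complex.ofReal_pow]
    rw [← Fin.sum_univ_eq_sum_range (fun j => ((Real.sin (((j : ℝ) + 1) * b) : ℂ)) ^ 2)]
    exact Finset.sum_congr rfl fun j _ => by simp only [hσ]; ring
  have key : A + starRingEnd ℂ A + A * starRingEnd ℂ A * (T : ℂ) = 0 := by
    have hTC : (T : ℂ) = 2 * (π : ℂ) * ξ.im := by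
      have h0 : T = 2 * π * ξ.im := by
        rw [hξ]; field_simp
      rw [h0]; push_cast; ring
    rw [hA, hTC]
    have hwc : starRingEnd ℂ ((α : ℂ) - ξ) ≠ 0 := by simpa using star_ne_zero.mpr hw
    have hconjξ : starRingEnd ℂ ξ = ξ - 2 * ξ.im * Complex.I := by
      have h := Complex.sub_conj ξ
      push_cast at h
      linear_combination -h
    simp only [map_div₀, Complex.conj_I, map_sub, Complex.conj_ofReal, hconjξ] at hwc ⊢
    field_simp
    have hwc' : (α : ℂ) - (ξ - Complex.I * 2 * ξ.im) ≠ 0 := by convert hwc using 2; ring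
    field_simp
    ring_nf
  calc ∑ j : Fin N, S n j * starRingEnd ℂ (S s j)
      = ∑ j : Fin N, ((if n = j then 1 else 0) + A * σ n * σ j) *
          ((if s = j then 1 else 0) + starRingEnd ℂ A * σ s * σ j) := by
        refine Finset.sum_congr rfl fun j _ => ?_
        rw [hSj, hSj, map_add, map_mul, map_mul, hconjσ, hconjσ]
        congr 1
        split <;> simp
    _ = ∑ j : Fin N, ((if n = j then 1 else 0) * (if s = j then 1 else 0)
          + ((if n = j then 1 else 0) * (starRingEnd ℂ A * σ s * σ j)
          + ((A * σ n * σ j) * (if s = j then 1 else 0)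
          + A * starRingEnd ℂ A * σ n * σ s * (σ j * σ j)))) := by
        refine Finset.sum_congr rfl fun j _ => by ring
    _ = (if n = s then 1 else 0) + (starRingEnd ℂ A * σ s * σ n
          + (A * σ n * σ s + A * starRingEnd ℂ A * σ n * σ s * (T : ℂ))) := by
        rw [Finset.sum_add_distrib, Finset.sum_add_distrib, Finset.sum_add_distrib,
          ← Finset.mul_sum, hT]
        congr 1
        · simp [ite_mul, Finset.sum_ite_eq]
        congr 1
        · simp [ite_mul, Finset.sum_ite_eq]
        congr 1
        · simp [mul_ite, Finset.sum_ite_eq]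
    _ = (if n = s then 1 else 0) + σ n * σ s *
          (A + starRingEnd ℂ A + A * starRingEnd ℂ A * (T : ℂ)) := by ring
    _ = if n = s then 1 else 0 := by rw [key]; ring
end

section
/- Linear independence of plane waves on the circle: let a_1, …, a_N ∈ ℝ² be pairwise distinct points, let p > 0, and let c_1, …, c_N ∈ ℂ. If Σ_{j=1}^N c_j·e^{−i p ω·a_j} = 0 for every unit vector ω ∈ ℝ², then c_j = 0 for every j. -/
open Real Complex

private lemma exists_good_direction {N : ℕ} (a : Fin N → EuclideanSpace ℝ (Fin 2))
    (ha : Function.Injective a) :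
    ∃ u v : EuclideanSpace ℝ (Fin 2), ‖u‖ = 1 ∧ ‖v‖ = 1 ∧ (inner ℝ u v : ℝ) = 0 ∧
      Function.Injective (fun j => (inner ℝ (a j) v : ℝ)) := by
  -- pick t avoiding finitely many bad slopes
  obtain ⟨t, ht⟩ : ∃ t : ℝ, t ∉ Set.range
      (fun jk : Fin N × Fin N => -(a jk.1 0 - a jk.2 0) / (a jk.1 1 - a jk.2 1)) := by
    have : (Set.range (fun jk : Fin N × Fin N =>
        -(a jk.1 0 - a jk.2 0) / (a jk.1 1 - a jk.2 1)))ᶜ.Nonempty :=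
      ((Set.finite_range _).infinite_compl).nonempty
    exact this
  have key : ∀ j k, j ≠ k → (a j 0 - a k 0) + t * (a j 1 - a k 1) ≠ 0 := by
    intro j k hjk H
    by_cases h1 : a j 1 - a k 1 = 0
    · have h0 : a j 0 - a k 0 = 0 := by rw [h1] at H; linarith
      apply hjk
      apply ha
      exact PiLp.ext (Fin.forall_fin_two.2 ⟨by linarith, by linarith⟩)
    · exact ht ⟨(j, k), by field_simp; linarith⟩
  set n := Real.sqrt (1 + t ^ 2) with hn_def
  have hpos : (0:ℝ) < 1 + t ^ 2 := by positivity
  have hn : 0 < n := Real.sqrt_pos.2 hpos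
  have hn2 : n ^ 2 = 1 + t ^ 2 := Real.sq_sqrt hpos.le
  set e := (WithLp.equiv 2 (Fin 2 → ℝ)).symm with he_def
  refine ⟨e ![n⁻¹ * t, -n⁻¹], e ![n⁻¹, n⁻¹ * t], ?_, ?_, ?_, ?_⟩
  · rw [EuclideanSpace.norm_eq]
    simp only [he_def, WithLp.equiv_symm_apply, PiLp.toLp_apply, Fin.sum_univ_two,
      Matrix.cons_val_zero, Matrix.cons_val_one, Matrix.head_cons,
      Real.norm_eq_abs, _root_.sq_abs]
    rw [show (n⁻¹ * t) ^ 2 + (-n⁻¹) ^ 2 = 1 from by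
      field_simp; nlinarith [hn2]]
    exact Real.sqrt_one
  · rw [EuclideanSpace.norm_eq]
    simp only [he_def, WithLp.equiv_symm_apply, PiLp.toLp_apply, Fin.sum_univ_two,
      Matrix.cons_val_zero, Matrix.cons_val_one, Matrix.head_cons,
      Real.norm_eq_abs, _root_.sq_abs]
    rw [show (n⁻¹) ^ 2 + (n⁻¹ * t) ^ 2 = 1 from by
      field_simp; nlinarith [hn2]]
    exact Real.sqrt_one
  · simp only [he_def, PiLp.inner_apply, WithLp.equiv_symm_apply, PiLp.toLp_apply, Fin.sum_univ_two,
      Matrix.cons_val_zero, Matrix.cons_val_one, Matrix.head_cons, RCLike.inner_apply,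
      conj_trivial]
    ring
  · intro j k hjk
    simp only [he_def, PiLp.inner_apply, WithLp.equiv_symm_apply, PiLp.toLp_apply, Fin.sum_univ_two,
      Matrix.cons_val_zero, Matrix.cons_val_one, Matrix.head_cons, RCLike.inner_apply,
      conj_trivial] at hjk
    by_contra hne
    apply key j k hne
    have hn' : n⁻¹ ≠ 0 := by positivity
    field_simp at hjk
    nlinarith [hjk]

set_option maxHeartbeats 1000000 in
/-- Linear independence of plane waves on the circle: if `a_1, …, a_N ∈ ℝ²` are
pairwise distinct, `p > 0`, and `Σ_j c_j·e^{−i p ω·a_j} = 0` for every unit vector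
`ω ∈ ℝ²`, then all coefficients `c_j` vanish. -/
theorem planeWaves_on_circle_linearIndependent (N : ℕ)
    (a : Fin N → EuclideanSpace ℝ (Fin 2)) (ha : Function.Injective a)
    (p : ℝ) (hp : 0 < p) (c : Fin N → ℂ)
    (h : ∀ ω : EuclideanSpace ℝ (Fin 2), ‖ω‖ = 1 →
      ∑ j : Fin N, c j * Complex.exp (-Complex.I * (p : ℂ) *
        ((inner ℝ ω (a j) : ℝ) : ℂ)) = 0) :
    ∀ j : Fin N, c j = 0 := by
  obtain ⟨u, v, hu1, hv1, huv, hBinj⟩ := exists_good_direction a ha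
  set A : Fin N → ℝ := fun j => (inner ℝ (a j) u : ℝ) with hA_def
  set B : Fin N → ℝ := fun j => (inner ℝ (a j) v : ℝ) with hB_def
  -- the analytic continuation
  set F : ℂ → ℂ := fun z => ∑ j : Fin N, c j * Complex.exp (-Complex.I * (p : ℂ) *
      ((A j : ℂ) * Complex.cos z + (B j : ℂ) * Complex.sin z)) with hF_def
  have hFd : Differentiable ℂ F := by
    apply Differentiable.fun_sum
    intro j _
    apply Differentiable.const_mul
    apply Complex.differentiable_exp.comp
    apply Differentiable.const_mul
    exact (Complex.differentiable_cos.const_mul _).add (Complex.differentiable_sin.const_mul _)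
  have hFreal : ∀ θ : ℝ, F θ = 0 := by
    intro θ
    set ω : EuclideanSpace ℝ (Fin 2) := Real.cos θ • u + Real.sin θ • v with hω_def
    have huu : (inner ℝ u u : ℝ) = 1 := by
      rw [real_inner_self_eq_norm_sq, hu1]; norm_num
    have hvv : (inner ℝ v v : ℝ) = 1 := by
      rw [real_inner_self_eq_norm_sq, hv1]; norm_num
    have hvu : (inner ℝ v u : ℝ) = 0 := by rw [real_inner_comm]; exact huv
    have hωω : (inner ℝ ω ω : ℝ) = 1 := by
      simp only [hω_def, inner_add_left, inner_add_right, real_inner_smul_left,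
        real_inner_smul_right, huu, hvv, huv, hvu]
      nlinarith [Real.sin_sq_add_cos_sq θ]
    have hω1 : ‖ω‖ = 1 := by
      have h2 : ‖ω‖ ^ 2 = 1 := by rw [← real_inner_self_eq_norm_sq]; exact hωω
      nlinarith [norm_nonneg ω]
    have hinner : ∀ j, (inner ℝ ω (a j) : ℝ) = Real.cos θ * A j + Real.sin θ * B j := by
      intro j
      simp only [hω_def, inner_add_left, real_inner_smul_left, hA_def, hB_def]
      rw [real_inner_comm u (a j), real_inner_comm v (a j)]
    have := h ω hω1
    rw [← this]
    apply Finset.sum_congr rfl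
    intro j _
    congr 1
    rw [hinner j]
    push_cast [Complex.ofReal_cos, Complex.ofReal_sin]
    ring
  -- identity theorem: F vanishes identically
  have hF : ∀ z : ℂ, F z = 0 := by
    have han : AnalyticOnNhd ℂ F Set.univ :=
      hFd.differentiableOn.analyticOnNhd isOpen_univ
    have hfreq : ∃ᶠ z in nhdsWithin (0:ℂ) {(0:ℂ)}ᶜ, F z = 0 := by
      have htend : Filter.Tendsto (fun k : ℕ => ((((k:ℝ)+1)⁻¹ : ℝ) : ℂ)) Filter.atTop
          (nhdsWithin (0:ℂ) {(0:ℂ)}ᶜ) := by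
        apply tendsto_nhdsWithin_of_tendsto_nhds_of_eventually_within
        · have h1 : Filter.Tendsto (fun k : ℕ => ((k:ℝ)+1)⁻¹) Filter.atTop (nhds 0) :=
            tendsto_one_div_add_atTop_nhds_zero_nat.congr (by intro k; rw [one_div])
          have h2 := (Complex.continuous_ofReal.tendsto 0).comp h1
          simpa [Function.comp_def] using h2
        · filter_upwards with k
          simp only [Set.mem_compl_iff, Set.mem_singleton_iff]
          intro hk
          have h3 : ((k:ℝ)+1)⁻¹ = 0 := by exact_mod_cast hk
          have h4 : (0:ℝ) < ((k:ℝ)+1)⁻¹ := by positivity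
          rw [h3] at h4
          exact lt_irrefl _ h4
      exact htend.frequently (Filter.Frequently.of_forall fun k => hFreal _)
    have := han.eqOn_zero_of_preconnected_of_frequently_eq_zero
      isPreconnected_univ (Set.mem_univ (0:ℂ)) hfreq
    intro z
    exact this (Set.mem_univ z)
  -- modulus of each term along the imaginary axis
  have habs : ∀ (j : Fin N) (t : ℝ),
      ‖(Complex.exp (-Complex.I * (p : ℂ) *
        ((A j : ℂ) * Complex.cos ((t:ℂ) * Complex.I) +
         (B j : ℂ) * Complex.sin ((t:ℂ) * Complex.I))))‖ =
      Real.exp (p * B j * Real.sinh t) := by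
    intro j t
    rw [Complex.cos_mul_I, Complex.sin_mul_I, Complex.norm_exp]
    congr 1
    simp [Complex.mul_re, Complex.mul_im, Complex.add_re, Complex.add_im,
      Complex.cosh_ofReal_re, Complex.sinh_ofReal_re]
    ring
  -- contradiction argument
  by_contra hc
  push_neg at hc
  obtain ⟨j₀, hj₀⟩ := hc
  set T : Finset (Fin N) := Finset.univ.filter (fun j => c j ≠ 0) with hT_def
  have hTne : T.Nonempty := ⟨j₀, by simp [hT_def, hj₀]⟩
  obtain ⟨js, hjsT, hjsmax⟩ := T.exists_max_image B hTne
  have hcjs : c js ≠ 0 := by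
    have := hjsT; simp [hT_def] at this; exact this
  have hlt : ∀ j ∈ T.erase js, B j < B js := by
    intro j hj
    rcases Finset.mem_erase.1 hj with ⟨hne, hjT⟩
    rcases lt_or_eq_of_le (hjsmax j hjT) with hlt | heq
    · exact hlt
    · exact absurd (hBinj heq) hne
  -- key bound for every s : ℝ
  have hbound : ∀ s : ℝ, ‖c js‖ ≤
      ∑ j ∈ T.erase js, ‖c j‖ * Real.exp (p * (B j - B js) * s) := by
    intro s
    set t := Real.arsinh s with ht_def
    have hsinh : Real.sinh t = s := Real.sinh_arsinh s
    have hzero := hF ((t:ℂ) * Complex.I)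
    have hzero' : ∑ j ∈ T, c j * Complex.exp (-Complex.I * (p : ℂ) *
        ((A j : ℂ) * Complex.cos ((t:ℂ) * Complex.I) +
         (B j : ℂ) * Complex.sin ((t:ℂ) * Complex.I))) = 0 := by
      rw [← hzero]
      exact Finset.sum_subset (Finset.subset_univ T) (by
        intro j _ hjT
        have : c j = 0 := by
          by_contra hne
          exact hjT (by simp [hT_def, hne])
        rw [this, zero_mul])
    rw [← Finset.add_sum_erase T _ hjsT] at hzero'
    have heq : c js * Complex.exp (-Complex.I * (p : ℂ) *
        ((A js : ℂ) * Complex.cos ((t:ℂ) * Complex.I) +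
         (B js : ℂ) * Complex.sin ((t:ℂ) * Complex.I))) =
        -∑ j ∈ T.erase js, c j * Complex.exp (-Complex.I * (p : ℂ) *
        ((A j : ℂ) * Complex.cos ((t:ℂ) * Complex.I) +
         (B j : ℂ) * Complex.sin ((t:ℂ) * Complex.I))) := by
      linear_combination hzero'
    have habs1 : ‖c js‖ * Real.exp (p * B js * s) ≤
        ∑ j ∈ T.erase js, ‖c j‖ * Real.exp (p * B j * s) := by
      have := congrArg (‖·‖) heq
      rw [norm_mul, habs js t, hsinh, norm_neg] at this
      rw [this]
      refine le_trans (norm_sum_le _ _) ?_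
      apply le_of_eq
      apply Finset.sum_congr rfl
      intro j _
      rw [norm_mul, habs j t, hsinh]
    have hexp : (0:ℝ) < Real.exp (p * B js * s) := Real.exp_pos _
    rw [← le_div_iff₀ hexp] at habs1
    refine le_trans habs1 (le_of_eq ?_)
    rw [Finset.sum_div]
    apply Finset.sum_congr rfl
    intro j _
    rw [mul_div_assoc, ← Real.exp_sub]
    ring_nf
  -- the bound tends to 0
  have htend : Filter.Tendsto (fun s : ℝ => ∑ j ∈ T.erase js,
      ‖c j‖ * Real.exp (p * (B j - B js) * s)) Filter.atTop (nhds 0) := by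
    have hzero : ∑ j ∈ T.erase js, (0:ℝ) = 0 := Finset.sum_const_zero
    rw [← hzero]
    refine tendsto_finset_sum _ fun j hj => ?_
    have hk : p * (B j - B js) < 0 := by
      have := hlt j hj
      nlinarith
    have h1 : Filter.Tendsto (fun s : ℝ => p * (B j - B js) * s) Filter.atTop Filter.atBot :=
      (Filter.tendsto_const_mul_atBot_of_neg hk).2 Filter.tendsto_id
    have h2 : Filter.Tendsto (fun s : ℝ => Real.exp (p * (B j - B js) * s))
        Filter.atTop (nhds 0) := Real.tendsto_exp_atBot.comp h1
    simpa using h2.const_mul (‖c j‖)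
  have hle : ‖c js‖ ≤ 0 := ge_of_tendsto' htend hbound
  exact hcjs (norm_eq_zero.mp (le_antisymm hle (norm_nonneg _)))
end

section
/- Singularity of the Landau-level sum: let B > 0, z ∈ ℝ and l₀ ∈ ℤ_{≥0} be such that B(2l₀+1) − z > 0. Then lim_{ρ → 0+} ρ · Σ_{l=l₀}^∞ exp(−ρ·√(B(2l+1) − z)) / √(B(2l+1) − z) = 1/B; equivalently, for each ρ > 0 the sum is squeezed between the integrals (1/(Bρ))·exp(−ρ√(B(2l₀−1) − z)) and (1/(Bρ))·exp(−ρ√(B(2l₀+1) − z)) (the lower bound requiring B(2l₀−1) − z > 0), both of which behave as 1/(Bρ) as ρ → 0+. -/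
open Real Filter Topology


lemma exp_sub_exp_bounds {x y : ℝ} (hxy : x ≤ y) :
    (y - x) * Real.exp (-y) ≤ Real.exp (-x) - Real.exp (-y) ∧
    Real.exp (-x) - Real.exp (-y) ≤ (y - x) * Real.exp (-x) := by
  have h1 : Real.exp (-x) = Real.exp (y - x) * Real.exp (-y) := by
    rw [← Real.exp_add]; ring_nf
  have h2 := Real.add_one_le_exp (y - x)
  have h3 := Real.add_one_le_exp (x - y)
  have h4 : Real.exp (x - y) * Real.exp (y - x) = 1 := by
    rw [← Real.exp_add]; simp
  have h5 := Real.exp_pos (-y)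
  have h6 := Real.exp_pos (y - x)
  have h7 := mul_le_mul_of_nonneg_right h3 h6.le
  constructor
  · nlinarith
  · nlinarith [mul_le_mul_of_nonneg_right h7 h5.le]

lemma landau_core (B c ρ : ℝ) (hB : 0 < B) (hc : 0 < c) (hρ : 0 < ρ) :
    Summable (fun l : ℕ => Real.exp (-ρ * Real.sqrt (c + 2*B*l)) / Real.sqrt (c + 2*B*l)) ∧
    (1/(B*ρ)) * Real.exp (-ρ * Real.sqrt c) ≤
      ∑' l : ℕ, Real.exp (-ρ * Real.sqrt (c + 2*B*l)) / Real.sqrt (c + 2*B*l) ∧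
    ∑' l : ℕ, Real.exp (-ρ * Real.sqrt (c + 2*B*(l+1))) / Real.sqrt (c + 2*B*(l+1)) ≤
      (1/(B*ρ)) * Real.exp (-ρ * Real.sqrt c) := by
  set a : ℕ → ℝ := fun l => c + 2*B*l with ha
  have hapos : ∀ l : ℕ, 0 < a l := by
    intro l
    have : (0:ℝ) ≤ l := Nat.cast_nonneg l
    simp only [ha]
    nlinarith
  set h : ℕ → ℝ := fun l => Real.exp (-ρ * Real.sqrt (a l)) with hh
  set g : ℕ → ℝ := fun l => Real.exp (-ρ * Real.sqrt (a l)) / Real.sqrt (a l) with hg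
  have hstep : ∀ l : ℕ, a (l+1) = a l + 2*B := by
    intro l; simp only [ha]; push_cast; ring
  have hsqrt_le : ∀ l : ℕ, Real.sqrt (a l) ≤ Real.sqrt (a (l+1)) := by
    intro l; apply Real.sqrt_le_sqrt; rw [hstep]; linarith
  -- key inequalities
  have key1 : ∀ l : ℕ, h l - h (l+1) ≤ B * ρ * g l := by
    intro l
    have hx : ρ * Real.sqrt (a l) ≤ ρ * Real.sqrt (a (l+1)) := by
      exact mul_le_mul_of_nonneg_left (hsqrt_le l) hρ.le
    obtain ⟨_, h2⟩ := exp_sub_exp_bounds hx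
    have hsa : 0 < Real.sqrt (a l) := Real.sqrt_pos.2 (hapos l)
    have hd : Real.sqrt (a (l+1)) - Real.sqrt (a l) ≤ B / Real.sqrt (a l) := by
      have hsq : Real.sqrt (a (l+1)) ^ 2 = a l + 2*B := by
        rw [Real.sq_sqrt (hapos (l+1)).le, hstep]
      have hsq2 : Real.sqrt (a l) ^ 2 = a l := Real.sq_sqrt (hapos l).le
      rw [le_div_iff₀ hsa]
      nlinarith [hsqrt_le l, hsa, sq_nonneg (Real.sqrt (a (l+1)) - Real.sqrt (a l))]
    have : ρ * Real.sqrt (a (l+1)) - ρ * Real.sqrt (a l)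
        ≤ ρ * (B / Real.sqrt (a l)) := by
      rw [← mul_sub]; exact mul_le_mul_of_nonneg_left hd hρ.le
    calc h l - h (l+1) ≤ (ρ * Real.sqrt (a (l+1)) - ρ * Real.sqrt (a l)) *
          Real.exp (-(ρ * Real.sqrt (a l))) := by
          simpa [hh, neg_mul] using h2
      _ ≤ ρ * (B / Real.sqrt (a l)) * Real.exp (-(ρ * Real.sqrt (a l))) := by
          exact mul_le_mul_of_nonneg_right this (Real.exp_pos _).le
      _ = B * ρ * g l := by
          simp only [hg, neg_mul]
          field_simp
  have key2 : ∀ l : ℕ, B * ρ * g (l+1) ≤ h l - h (l+1) := by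
    intro l
    have hx : ρ * Real.sqrt (a l) ≤ ρ * Real.sqrt (a (l+1)) := by
      exact mul_le_mul_of_nonneg_left (hsqrt_le l) hρ.le
    obtain ⟨h1, _⟩ := exp_sub_exp_bounds hx
    have hsa : 0 < Real.sqrt (a (l+1)) := Real.sqrt_pos.2 (hapos (l+1))
    have hd : B / Real.sqrt (a (l+1)) ≤ Real.sqrt (a (l+1)) - Real.sqrt (a l) := by
      have hsq : Real.sqrt (a (l+1)) ^ 2 = a l + 2*B := by
        rw [Real.sq_sqrt (hapos (l+1)).le, hstep]
      have hsq2 : Real.sqrt (a l) ^ 2 = a l := Real.sq_sqrt (hapos l).le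
      rw [div_le_iff₀ hsa]
      nlinarith [hsqrt_le l, Real.sqrt_nonneg (a l), sq_nonneg (Real.sqrt (a (l+1)) - Real.sqrt (a l))]
    have : ρ * (B / Real.sqrt (a (l+1)))
        ≤ ρ * Real.sqrt (a (l+1)) - ρ * Real.sqrt (a l) := by
      rw [← mul_sub]; exact mul_le_mul_of_nonneg_left hd hρ.le
    calc B * ρ * g (l+1) = ρ * (B / Real.sqrt (a (l+1))) *
          Real.exp (-(ρ * Real.sqrt (a (l+1)))) := by
          simp only [hg, neg_mul]; field_simp
      _ ≤ (ρ * Real.sqrt (a (l+1)) - ρ * Real.sqrt (a l)) *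
          Real.exp (-(ρ * Real.sqrt (a (l+1)))) := by
          exact mul_le_mul_of_nonneg_right this (Real.exp_pos _).le
      _ ≤ h l - h (l+1) := by simpa [hh, neg_mul] using h1
  have hmono : ∀ l : ℕ, h (l+1) ≤ h l := by
    intro l
    apply Real.exp_le_exp.2
    have := hsqrt_le l
    nlinarith
  have hnonneg : ∀ l : ℕ, 0 ≤ h l - h (l+1) := fun l => sub_nonneg.2 (hmono l)
  have hgnonneg : ∀ l : ℕ, 0 ≤ g l := fun l =>
    div_nonneg (Real.exp_pos _).le (Real.sqrt_nonneg _)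
  -- summability of telescoping
  have htel_sum : Summable (fun l : ℕ => h l - h (l+1)) := by
    apply summable_of_sum_range_le (c := h 0) hnonneg
    intro n
    rw [Finset.sum_range_sub' h n]
    have : 0 ≤ h n := (Real.exp_pos _).le
    linarith
  -- h tends to 0
  have hlim : Tendsto h atTop (𝓝 0) := by
    have h1 : Tendsto (fun l : ℕ => a l) atTop atTop := by
      apply tendsto_atTop_add_const_left
      exact (tendsto_natCast_atTop_atTop).const_mul_atTop (by linarith : (0:ℝ) < 2*B)
    have hsqT : Tendsto Real.sqrt atTop atTop := by
      apply tendsto_atTop_atTop.2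
      intro b
      refine ⟨b^2, fun x hx => ?_⟩
      calc b ≤ |b| := le_abs_self b
        _ = Real.sqrt (b^2) := (Real.sqrt_sq_eq_abs b).symm
        _ ≤ Real.sqrt x := Real.sqrt_le_sqrt hx
    have h2 : Tendsto (fun l : ℕ => Real.sqrt (a l)) atTop atTop := hsqT.comp h1
    have h2' : Tendsto (fun l : ℕ => ρ * Real.sqrt (a l)) atTop atTop :=
      Tendsto.const_mul_atTop hρ h2
    have h3 : Tendsto (fun l : ℕ => -ρ * Real.sqrt (a l)) atTop atBot := by
      have h3' : Tendsto (fun l : ℕ => -(ρ * Real.sqrt (a l))) atTop atBot :=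
        tendsto_neg_atBot_iff.mpr h2'
      exact h3'.congr (fun l => by ring)
    exact Real.tendsto_exp_atBot.comp h3
  -- tsum of telescoping = h 0
  have htel : ∑' l : ℕ, (h l - h (l+1)) = h 0 := by
    have t1 := htel_sum.hasSum.tendsto_sum_nat
    have t2 : Tendsto (fun n => ∑ i ∈ Finset.range n, (h i - h (i+1))) atTop (𝓝 (h 0)) := by
      have : (fun n => ∑ i ∈ Finset.range n, (h i - h (i+1))) = fun n => h 0 - h n := by
        funext n; exact Finset.sum_range_sub' h n
      rw [this]
      simpa using (tendsto_const_nhds.sub hlim)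
    exact tendsto_nhds_unique t1 t2
  -- summability of g via key2
  have hBρ : 0 < B * ρ := mul_pos hB hρ
  have hsum_shift : Summable (fun l : ℕ => g (l+1)) := by
    apply Summable.of_nonneg_of_le (fun l => hgnonneg (l+1))
      (fun l => ?_) (htel_sum.mul_left (1/(B*ρ)))
    rw [div_mul_eq_mul_div, one_mul, le_div_iff₀ hBρ, mul_comm]
    exact key2 l
  have hsumg : Summable g := by
    rw [← summable_nat_add_iff 1]
    exact hsum_shift
  refine ⟨hsumg, ?_, ?_⟩
  · -- lower bound
    have hle : ∀ l : ℕ, 1/(B*ρ) * (h l - h (l+1)) ≤ g l := by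
      intro l
      rw [div_mul_eq_mul_div, one_mul, div_le_iff₀ hBρ, mul_comm]
      exact key1 l
    have := Summable.tsum_le_tsum hle (htel_sum.mul_left (1/(B*ρ))) hsumg
    rw [tsum_mul_left, htel] at this
    simpa [hh, ha] using this
  · -- upper bound
    have hle : ∀ l : ℕ, g (l+1) ≤ 1/(B*ρ) * (h l - h (l+1)) := by
      intro l
      rw [div_mul_eq_mul_div, one_mul, le_div_iff₀ hBρ, mul_comm]
      exact key2 l
    have := Summable.tsum_le_tsum hle hsum_shift (htel_sum.mul_left (1/(B*ρ)))
    rw [tsum_mul_left, htel] at this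
    have heq : (fun l : ℕ => Real.exp (-ρ * Real.sqrt (c + 2*B*(l+1))) / Real.sqrt (c + 2*B*(l+1)))
        = fun l : ℕ => g (l+1) := by
      funext l; simp only [hg, ha]; push_cast; ring_nf
    rw [heq]
    simpa [hh, ha] using this

/-- Singularity of the Landau-level sum: for `B > 0`, `z ∈ ℝ` and `l₀ ∈ ℤ_{≥0}` with
`B(2l₀+1) − z > 0`, the sum `S(ρ) = Σ_{l=l₀}^∞ e^{−ρ√(B(2l+1)−z)}/√(B(2l+1)−z)`
satisfies `ρ·S(ρ) → 1/B` as `ρ → 0+`; moreover for each `ρ > 0` it is squeezed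
between the integrals `(1/(Bρ))·e^{−ρ√(B(2l₀+1)−z)} ≤ S(ρ)` and, provided
`B(2l₀−1) − z > 0`, `S(ρ) ≤ (1/(Bρ))·e^{−ρ√(B(2l₀−1)−z)}`. -/
theorem landau_sum_singularity (B z : ℝ) (l₀ : ℕ) (hB : 0 < B)
    (h : 0 < B * (2 * (l₀ : ℝ) + 1) - z) :
    Tendsto (fun ρ : ℝ => ρ * ∑' l : ℕ,
        Real.exp (-ρ * Real.sqrt (B * (2 * (((l₀ + l : ℕ)) : ℝ) + 1) - z)) /
          Real.sqrt (B * (2 * (((l₀ + l : ℕ)) : ℝ) + 1) - z))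
      (𝓝[>] (0 : ℝ)) (𝓝 (1 / B)) ∧
    (∀ ρ : ℝ, 0 < ρ →
      (1 / (B * ρ)) * Real.exp (-ρ * Real.sqrt (B * (2 * (l₀ : ℝ) + 1) - z)) ≤
        ∑' l : ℕ,
          Real.exp (-ρ * Real.sqrt (B * (2 * (((l₀ + l : ℕ)) : ℝ) + 1) - z)) /
            Real.sqrt (B * (2 * (((l₀ + l : ℕ)) : ℝ) + 1) - z)) ∧
    (0 < B * (2 * (l₀ : ℝ) - 1) - z → ∀ ρ : ℝ, 0 < ρ →
      (∑' l : ℕ,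
          Real.exp (-ρ * Real.sqrt (B * (2 * (((l₀ + l : ℕ)) : ℝ) + 1) - z)) /
            Real.sqrt (B * (2 * (((l₀ + l : ℕ)) : ℝ) + 1) - z)) ≤
        (1 / (B * ρ)) * Real.exp (-ρ * Real.sqrt (B * (2 * (l₀ : ℝ) - 1) - z))) := by
  set c : ℝ := B * (2 * (l₀ : ℝ) + 1) - z with hcdef
  have harg : ∀ l : ℕ, B * (2 * (((l₀ + l : ℕ)) : ℝ) + 1) - z = c + 2*B*l := by
    intro l; rw [hcdef]; push_cast; ring
  have hterm : ∀ ρ : ℝ, (fun l : ℕ =>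
      Real.exp (-ρ * Real.sqrt (B * (2 * (((l₀ + l : ℕ)) : ℝ) + 1) - z)) /
        Real.sqrt (B * (2 * (((l₀ + l : ℕ)) : ℝ) + 1) - z))
      = fun l : ℕ => Real.exp (-ρ * Real.sqrt (c + 2*B*l)) / Real.sqrt (c + 2*B*l) := by
    intro ρ; funext l; rw [harg l]
  have lower : ∀ ρ : ℝ, 0 < ρ →
      (1 / (B * ρ)) * Real.exp (-ρ * Real.sqrt c) ≤
        ∑' l : ℕ, Real.exp (-ρ * Real.sqrt (B * (2 * (((l₀ + l : ℕ)) : ℝ) + 1) - z)) /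
          Real.sqrt (B * (2 * (((l₀ + l : ℕ)) : ℝ) + 1) - z) := by
    intro ρ hρ
    rw [tsum_congr (fun l => by rw [harg l])]
    exact (landau_core B c ρ hB h hρ).2.1
  have upper : ∀ ρ : ℝ, 0 < ρ →
      (∑' l : ℕ, Real.exp (-ρ * Real.sqrt (B * (2 * (((l₀ + l : ℕ)) : ℝ) + 1) - z)) /
          Real.sqrt (B * (2 * (((l₀ + l : ℕ)) : ℝ) + 1) - z)) ≤
        Real.exp (-ρ * Real.sqrt c) / Real.sqrt c + (1 / (B * ρ)) * Real.exp (-ρ * Real.sqrt c) := by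
    intro ρ hρ
    obtain ⟨hs, _, hub⟩ := landau_core B c ρ hB h hρ
    rw [tsum_congr (fun l => by rw [harg l])]
    rw [Summable.tsum_eq_zero_add hs]
    simp only [Nat.cast_zero, mul_zero, add_zero, Nat.cast_add, Nat.cast_one]
    exact add_le_add le_rfl hub
  refine ⟨?_, lower, ?_⟩
  · -- tendsto
    have hlow : Tendsto (fun ρ : ℝ => Real.exp (-ρ * Real.sqrt c) / B) (𝓝[>] (0:ℝ)) (𝓝 (1/B)) := by
      have hcont : Continuous fun ρ : ℝ => Real.exp (-ρ * Real.sqrt c) / B := by fun_prop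
      have h0 := hcont.tendsto 0
      rw [show Real.exp (-(0:ℝ) * Real.sqrt c)/B = 1/B by
        norm_num] at h0
      exact h0.mono_left nhdsWithin_le_nhds
    have hup : Tendsto (fun ρ : ℝ => ρ * (Real.exp (-ρ * Real.sqrt c) / Real.sqrt c)
        + Real.exp (-ρ * Real.sqrt c) / B) (𝓝[>] (0:ℝ)) (𝓝 (1/B)) := by
      have hcont : Continuous fun ρ : ℝ => ρ * (Real.exp (-ρ * Real.sqrt c) / Real.sqrt c)
          + Real.exp (-ρ * Real.sqrt c) / B := by fun_prop
      have h0 := hcont.tendsto 0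
      rw [show (0:ℝ) * (Real.exp (-(0:ℝ) * Real.sqrt c) / Real.sqrt c)
          + Real.exp (-(0:ℝ) * Real.sqrt c)/B = 1/B by norm_num] at h0
      exact h0.mono_left nhdsWithin_le_nhds
    apply tendsto_of_tendsto_of_tendsto_of_le_of_le' hlow hup
    · filter_upwards [self_mem_nhdsWithin] with ρ (hρ : 0 < ρ)
      have := mul_le_mul_of_nonneg_left (lower ρ hρ) hρ.le
      calc Real.exp (-ρ * Real.sqrt c) / B
          = ρ * ((1 / (B * ρ)) * Real.exp (-ρ * Real.sqrt c)) := by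
            field_simp
        _ ≤ _ := this
    · filter_upwards [self_mem_nhdsWithin] with ρ (hρ : 0 < ρ)
      have := mul_le_mul_of_nonneg_left (upper ρ hρ) hρ.le
      calc ρ * _ ≤ ρ * (Real.exp (-ρ * Real.sqrt c) / Real.sqrt c
            + (1 / (B * ρ)) * Real.exp (-ρ * Real.sqrt c)) := this
        _ = ρ * (Real.exp (-ρ * Real.sqrt c) / Real.sqrt c)
            + Real.exp (-ρ * Real.sqrt c) / B := by field_simp
  · -- upper bound via c'
    intro hc' ρ hρ
    set c' : ℝ := B * (2 * (l₀ : ℝ) - 1) - z with hc'def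
    have harg' : ∀ l : ℕ, B * (2 * (((l₀ + l : ℕ)) : ℝ) + 1) - z = c' + 2*B*(l+1) := by
      intro l; rw [hc'def]; push_cast; ring
    rw [tsum_congr (fun l => by rw [harg' l])]
    exact (landau_core B c' ρ hB hc' hρ).2.2
end
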